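/- arXiv:1611.09273 — 2 statements merged into one kernel-verified Lean document; each statement's English description precedes it below -/
import Mathlib

section
/- Let 2 ≤ j ≤ d−1 and let f, g be continuous real-valued functions on S^{d-1}. Assume that for every j-dimensional linear subspace α of ℝ^d there exists a vector a_α ∈ α such that either f(−u) + a_α·u = g(u) for all u ∈ α ∩ S^{d-1}, or f(u) + a_α·u = g(u) for all u ∈ α ∩ S^{d-1}. Then there exists b ∈ ℝ^d such that g(u) = f(u) + b·u for all u ∈ S^{d-1}, or g(u) = f(−u) + b·u for all u ∈ S^{d-1}. -/
open scoped RealInnerProductSpace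
open Module Submodule Metric

set_option linter.unusedSectionVars false
set_option maxHeartbeats 1000000

section Helpers

variable {V : Type*} [NormedAddCommGroup V] [InnerProductSpace ℝ V] [FiniteDimensional ℝ V]

/-- Two vectors are linearly independent. -/
def Indep2 (x y : V) : Prop := ∀ a b : ℝ, a • x + b • y = 0 → a = 0 ∧ b = 0

/-- Three vectors are linearly independent. -/
def Indep3 (x y z : V) : Prop :=
  ∀ a b c : ℝ, a • x + b • y + c • z = 0 → a = 0 ∧ b = 0 ∧ c = 0

lemma Indep2.ne_zero_left {x y : V} (h : Indep2 x y) : x ≠ 0 := by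
  intro hx
  have := h 1 0 (by simp [hx])
  simpa using this.1

lemma Indep2.ne_zero_right {x y : V} (h : Indep2 x y) : y ≠ 0 := by
  intro hy
  have := h 0 1 (by simp [hy])
  simpa using this.2

lemma Indep3.pair12 {x y z : V} (h : Indep3 x y z) : Indep2 x y := by
  intro a b hab
  have := h a b 0 (by simpa using hab)
  exact ⟨this.1, this.2.1⟩

lemma Indep3.pair13 {x y z : V} (h : Indep3 x y z) : Indep2 x z := by
  intro a b hab
  have := h a 0 b (by simpa using hab)
  exact ⟨this.1, this.2.2⟩

lemma Indep3.pair23 {x y z : V} (h : Indep3 x y z) : Indep2 y z := by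
  intro a b hab
  have := h 0 a b (by simpa using hab)
  exact ⟨this.2.1, this.2.2⟩

lemma not_indep2 {x y : V} (hx : x ≠ 0) (h : ¬ Indep2 x y) : ∃ c : ℝ, y = c • x := by
  unfold Indep2 at h
  push_neg at h
  obtain ⟨a, b, hab, hne⟩ := h
  by_cases hb : b = 0
  · subst hb
    simp only [zero_smul, add_zero, smul_eq_zero] at hab
    rcases hab with ha | ha
    · exact absurd (hne ha) (by simp)
    · exact absurd ha hx
  · refine ⟨-(b⁻¹*a), ?_⟩
    have h2 : b • y = -(a • x) := by linear_combination (norm := module) hab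
    calc y = b⁻¹ • (b • y) := by rw [smul_smul, inv_mul_cancel₀ hb, one_smul]
    _ = b⁻¹ • (-(a • x)) := by rw [h2]
    _ = (-(b⁻¹*a)) • x := by rw [smul_neg, smul_smul, neg_smul]

lemma not_indep3 {x y z : V} (hxy : Indep2 x y) (h : ¬ Indep3 x y z) :
    ∃ a b : ℝ, z = a • x + b • y := by
  unfold Indep3 at h
  push_neg at h
  obtain ⟨a, b, c, habc, hne⟩ := h
  by_cases hc : c = 0
  · subst hc
    simp only [zero_smul, add_zero] at habc
    obtain ⟨ha, hb⟩ := hxy a b habc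
    exact absurd rfl (hne ha hb)
  · refine ⟨-(c⁻¹*a), -(c⁻¹*b), ?_⟩
    have h2 : c • z = -(a • x) - b • y := by linear_combination (norm := module) habc
    calc z = c⁻¹ • (c • z) := by rw [smul_smul, inv_mul_cancel₀ hc, one_smul]
    _ = c⁻¹ • (-(a • x) - b • y) := by rw [h2]
    _ = (-(c⁻¹*a)) • x + (-(c⁻¹*b)) • y := by
        rw [smul_sub, smul_neg, smul_smul, smul_smul, neg_smul, neg_smul]; abel

-- scaling: equality of inner products on unit vectors of a submodule extends
lemma inner_eq_of_unit {T : Submodule ℝ V} {b c : V}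
    (h : ∀ u ∈ T, ‖u‖ = 1 → ⟪b, u⟫ = ⟪c, u⟫) : ∀ x ∈ T, ⟪b, x⟫ = ⟪c, x⟫ := by
  intro x hx
  rcases eq_or_ne x 0 with rfl | hx0
  · simp
  · have hu : ‖x‖⁻¹ • x ∈ T := T.smul_mem _ hx
    have hn : ‖(‖x‖⁻¹ • x)‖ = 1 := norm_smul_inv_norm hx0
    have := h _ hu hn
    rw [real_inner_smul_right, real_inner_smul_right] at this
    have hxn : (‖x‖ : ℝ) ≠ 0 := norm_ne_zero_iff.mpr hx0
    field_simp at this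
    exact this

lemma mem_span_pair_of_perp {T : Submodule ℝ V} {ν μ z : V} (hν : ν ∈ T) (hμ : μ ∈ T)
    (hz : z ∈ T) (h : ∀ x ∈ T, ⟪ν, x⟫ = 0 → ⟪μ, x⟫ = 0 → ⟪z, x⟫ = 0) :
    ∃ a b : ℝ, z = a • ν + b • μ := by
  set K : Submodule ℝ V := (ℝ ∙ ν) ⊔ (ℝ ∙ μ) with hK
  have hKT : K ≤ T := sup_le ((span_singleton_le_iff_mem _ _).2 hν)
    ((span_singleton_le_iff_mem _ _).2 hμ)
  have hsup : K ⊔ (Kᗮ ⊓ T) = T := Submodule.sup_orthogonal_inf_of_hasOrthogonalProjection hKT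
  have hzmem : z ∈ K ⊔ (Kᗮ ⊓ T) := by rw [hsup]; exact hz
  rw [Submodule.mem_sup] at hzmem
  obtain ⟨k, hk, w, hw, rfl⟩ := hzmem
  obtain ⟨hw1, hw2⟩ := Submodule.mem_inf.mp hw
  have hνw : ⟪ν, w⟫ = 0 :=
    Submodule.inner_right_of_mem_orthogonal (Submodule.mem_sup_left
      (Submodule.mem_span_singleton_self ν)) hw1
  have hμw : ⟪μ, w⟫ = 0 :=
    Submodule.inner_right_of_mem_orthogonal (Submodule.mem_sup_right
      (Submodule.mem_span_singleton_self μ)) hw1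
  have hkw : ⟪k, w⟫ = 0 := Submodule.inner_right_of_mem_orthogonal hk hw1
  have hzw : ⟪k + w, w⟫ = 0 := h _ hw2 hνw hμw
  have : ⟪w, w⟫ = (0:ℝ) := by
    rw [inner_add_left, hkw] at hzw; linarith
  have hw0 : w = 0 := by
    rwa [inner_self_eq_zero] at this
  subst hw0
  rw [Submodule.mem_sup] at hk
  obtain ⟨y1, hy1, y2, hy2, rfl⟩ := hk
  rw [Submodule.mem_span_singleton] at hy1 hy2
  obtain ⟨a, rfl⟩ := hy1
  obtain ⟨bb, rfl⟩ := hy2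
  exact ⟨a, bb, by simp⟩

-- codimension-one bound
lemma finrank_inf_perp (T : Submodule ℝ V) (x : V) :
    finrank ℝ T ≤ finrank ℝ (T ⊓ (ℝ ∙ x)ᗮ : Submodule ℝ V) + 1 := by
  classical
  set φ : T →ₗ[ℝ] ℝ := ((innerSL ℝ x).toLinearMap).comp T.subtype with hφ
  have h1 : finrank ℝ T = finrank ℝ (LinearMap.range φ) + finrank ℝ (LinearMap.ker φ) :=
    (LinearMap.finrank_range_add_finrank_ker φ).symm
  have h2 : finrank ℝ (LinearMap.range φ) ≤ 1 := by
    simpa using (LinearMap.range φ).finrank_le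
  have h3 : finrank ℝ (LinearMap.ker φ) = finrank ℝ (T ⊓ (ℝ ∙ x)ᗮ : Submodule ℝ V) := by
    have hmap : Submodule.map T.subtype (LinearMap.ker φ) = T ⊓ (ℝ ∙ x)ᗮ := by
      ext y
      simp only [Submodule.mem_map, LinearMap.mem_ker, Submodule.mem_inf]
      constructor
      · rintro ⟨⟨y, hy⟩, hker, rfl⟩
        refine ⟨hy, ?_⟩
        rw [Submodule.mem_orthogonal_singleton_iff_inner_right]
        simpa [hφ] using hker
      · rintro ⟨hy, hperp⟩
        refine ⟨⟨y, hy⟩, ?_, rfl⟩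
        rw [Submodule.mem_orthogonal_singleton_iff_inner_right] at hperp
        simpa [hφ] using hperp
    rw [← hmap, Submodule.finrank_map_subtype_eq]
  omega

lemma exists_unit_mem (T : Submodule ℝ V) (h : 0 < finrank ℝ T) :
    ∃ v, v ∈ T ∧ ‖v‖ = 1 := by
  have : T ≠ ⊥ := by
    intro hbot
    rw [hbot] at h; simp at h
  obtain ⟨v, hv, hv0⟩ := Submodule.exists_mem_ne_zero_of_ne_bot this
  exact ⟨‖v‖⁻¹ • v, T.smul_mem _ hv, norm_smul_inv_norm hv0⟩

-- extract independent pairs/triples from a basis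
lemma exists_indep2_of_finrank (T : Submodule ℝ V) (h : 2 ≤ finrank ℝ T) :
    ∃ x, x ∈ T ∧ ∃ y, y ∈ T ∧ Indep2 x y := by
  classical
  obtain ⟨n, hn⟩ : ∃ n, finrank ℝ T = n := ⟨_, rfl⟩
  set b := Module.finBasis ℝ T
  have hn2 : 2 ≤ finrank ℝ T := h
  let i0 : Fin (finrank ℝ T) := ⟨0, by omega⟩
  let i1 : Fin (finrank ℝ T) := ⟨1, by omega⟩
  refine ⟨(b i0 : V), (b i0).2, (b i1 : V), (b i1).2, ?_⟩
  intro a c hac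
  have hT : a • (b i0) + c • (b i1) = (0 : T) := by
    apply Subtype.coe_injective
    push_cast
    simpa using hac
  have h0 := congrArg (fun t => (b.repr t) i0) hT
  have h1 := congrArg (fun t => (b.repr t) i1) hT
  simp [Finsupp.single_apply, i0, i1, Fin.ext_iff] at h0 h1
  exact ⟨h0, h1⟩

-- extend a nonzero vector of T to an independent triple in T
lemma exists_indep3_extend (T : Submodule ℝ V) (hT : 3 ≤ finrank ℝ T) {u : V}
    (hu : u ∈ T) (hu0 : u ≠ 0) : ∃ s, s ∈ T ∧ ∃ t, t ∈ T ∧ Indep3 u s t := by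
  classical
  set b := Module.finBasis ℝ T
  have hrep : b.repr ⟨u, hu⟩ ≠ 0 := by
    intro h0
    apply hu0
    have : (⟨u, hu⟩ : T) = 0 := by
      have := congrArg (b.repr.symm) h0
      simpa using this
    exact congrArg Subtype.val this
  obtain ⟨k, hk⟩ : ∃ k, b.repr ⟨u, hu⟩ k ≠ 0 := by
    by_contra hc
    push_neg at hc
    exact hrep (Finsupp.ext hc)
  -- pick two indices different from k and from each other
  have h3 : 3 ≤ finrank ℝ T := hT
  obtain ⟨i, j, hik, hjk, hij⟩ : ∃ i j : Fin (finrank ℝ T), i ≠ k ∧ j ≠ k ∧ i ≠ j := by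
    by_cases h0 : k = ⟨0, by omega⟩
    · exact ⟨⟨1, by omega⟩, ⟨2, by omega⟩, by simp [h0, Fin.ext_iff], by simp [h0, Fin.ext_iff],
        by simp [Fin.ext_iff]⟩
    · by_cases h1 : k = ⟨1, by omega⟩
      · exact ⟨⟨0, by omega⟩, ⟨2, by omega⟩, by simp [h1, Fin.ext_iff], by simp [h1, Fin.ext_iff],
          by simp [Fin.ext_iff]⟩
      · exact ⟨⟨0, by omega⟩, ⟨1, by omega⟩, by simpa [Fin.ext_iff, eq_comm] using h0,
          by simpa [Fin.ext_iff, eq_comm] using h1, by simp [Fin.ext_iff]⟩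
  refine ⟨(b i : V), (b i).2, (b j : V), (b j).2, ?_⟩
  intro a c e habc
  have hTeq : a • (⟨u, hu⟩ : T) + c • (b i) + e • (b j) = (0 : T) := by
    apply Subtype.coe_injective
    push_cast
    simpa using habc
  have hrepr : ∀ m : Fin (finrank ℝ T),
      a * (b.repr ⟨u, hu⟩) m + c * (if i = m then 1 else 0) + e * (if j = m then 1 else 0) = 0 := by
    intro m
    have := congrArg (fun t => (b.repr t) m) hTeq
    simpa only [map_add, map_smul, Finsupp.add_apply, Finsupp.smul_apply, Basis.repr_self,
      Finsupp.single_apply, smul_eq_mul, Finsupp.coe_zero, Pi.zero_apply, map_zero] using this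
  have hka := hrepr k
  rw [if_neg hik, if_neg hjk] at hka
  have ha : a = 0 := by
    have : a * (b.repr ⟨u, hu⟩) k = 0 := by linarith
    rcases mul_eq_zero.mp this with h | h
    · exact h
    · exact absurd h hk
  have hia := hrepr i
  rw [if_pos rfl, if_neg (Ne.symm hij), ha] at hia
  have hc : c = 0 := by simpa using hia
  have hja := hrepr j
  rw [if_neg hij, if_pos rfl, ha] at hja
  have he : e = 0 := by simpa using hja
  exact ⟨ha, hc, he⟩

lemma finrank_span_pair_le (x y : V) : finrank ℝ ((ℝ ∙ x) ⊔ (ℝ ∙ y) : Submodule ℝ V) ≤ 2 := by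
  have h := Submodule.finrank_sup_add_finrank_inf_eq (ℝ ∙ x) (ℝ ∙ y)
  have hx : ∀ w : V, finrank ℝ (ℝ ∙ w : Submodule ℝ V) ≤ 1 := by
    intro w
    rcases eq_or_ne w 0 with rfl | hw
    · rw [Submodule.span_zero_singleton]; simp
    · rw [finrank_span_singleton hw]
  have := hx x
  have := hx y
  omega

-- independent triple in T avoiding a small subspace W
lemma exists_indep3_avoid (T W : Submodule ℝ V) (hT : 3 ≤ finrank ℝ T)
    (hW : finrank ℝ W ≤ 2) :
    ∃ x, x ∈ T ∧ x ∉ W ∧ ∃ y, y ∈ T ∧ y ∉ W ∧ ∃ z, z ∈ T ∧ z ∉ W ∧ Indep3 x y z := by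
  obtain ⟨u, hu, huW⟩ : ∃ u, u ∈ T ∧ u ∉ W := by
    by_contra hc
    push_neg at hc
    have : T ≤ W := fun x hx => hc x hx
    have := Submodule.finrank_mono this
    omega
  have hu0 : u ≠ 0 := fun h => huW (h ▸ W.zero_mem)
  obtain ⟨s, hs, t, ht, hind⟩ := exists_indep3_extend T hT hu hu0
  -- adjust s and t to avoid W
  have key : ∀ w : V, w ∈ T → ∃ w', w' ∈ T ∧ w' ∉ W ∧ ∃ l : ℝ, w' = w + l • u := by
    intro w hw
    by_cases hwW : w ∈ W
    · refine ⟨w + u, T.add_mem hw hu, ?_, 1, by module⟩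
      intro hmem
      exact huW (by simpa using W.sub_mem hmem hwW)
    · exact ⟨w, hw, hwW, 0, by module⟩
  obtain ⟨s', hs', hs'W, ls, rfl⟩ := key s hs
  obtain ⟨t', ht', ht'W, lt, rfl⟩ := key t ht
  refine ⟨u, hu, huW, _, hs', hs'W, _, ht', ht'W, ?_⟩
  intro a c e habc
  have : (a + c * ls + e * lt) • u + c • s + e • t = 0 := by
    linear_combination (norm := module) habc
  obtain ⟨h1, h2, h3⟩ := hind _ _ _ this
  subst h2; subst h3
  simp at h1
  exact ⟨by linarith, rfl, rfl⟩

-- a set with no independent triple lies in a subspace of dimension ≤ 2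
lemma small_span (S : Set V) (hS0 : ∀ x ∈ S, x ≠ 0)
    (h : ¬ ∃ x ∈ S, ∃ y ∈ S, ∃ z ∈ S, Indep3 x y z) :
    ∃ W : Submodule ℝ V, finrank ℝ W ≤ 2 ∧ ∀ x ∈ S, x ∈ W := by
  rcases Set.eq_empty_or_nonempty S with rfl | ⟨ν, hν⟩
  · exact ⟨⊥, by simp, by simp⟩
  by_cases h2 : ∃ μ ∈ S, Indep2 ν μ
  · obtain ⟨μ, hμ, hνμ⟩ := h2
    refine ⟨(ℝ ∙ ν) ⊔ (ℝ ∙ μ), finrank_span_pair_le ν μ, ?_⟩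
    intro ρ hρ
    have h3 : ¬ Indep3 ν μ ρ := fun hind => h ⟨ν, hν, μ, hμ, ρ, hρ, hind⟩
    obtain ⟨a, b, rfl⟩ := not_indep3 hνμ h3
    exact Submodule.add_mem _ (Submodule.mem_sup_left (Submodule.smul_mem _ _
      (Submodule.mem_span_singleton_self ν)))
      (Submodule.mem_sup_right (Submodule.smul_mem _ _ (Submodule.mem_span_singleton_self μ)))
  · push_neg at h2
    refine ⟨ℝ ∙ ν, ?_, ?_⟩
    · rcases eq_or_ne ν 0 with rfl | hν0
      · rw [Submodule.span_zero_singleton]; simp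
      · rw [finrank_span_singleton hν0]; omega
    · intro ρ hρ
      obtain ⟨c, rfl⟩ := not_indep2 (hS0 ν hν) (h2 ρ hρ)
      exact Submodule.smul_mem _ _ (Submodule.mem_span_singleton_self ν)

-- the limit helper
lemma limit_helper {r : V → ℝ} (hr : ContinuousOn r (sphere (0:V) 1)) {w v bb : V}
    (hw : ‖w‖ = 1) (hv : ‖v‖ = 1) (hwv : ⟪w, v⟫ = 0)
    (h : ∀ t : ℝ, t ∈ Set.Ioc (0:ℝ) 1 →
      r (Real.cos t • w + Real.sin t • v) = ⟪bb, Real.cos t • w + Real.sin t • v⟫) :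
    r w = ⟪bb, w⟫ := by
  set γ : ℝ → V := fun t => Real.cos t • w + Real.sin t • v with hγ
  have hγnorm : ∀ t, ‖γ t‖ = 1 := by
    intro t
    have hsq : ‖γ t‖ ^ 2 = 1 := by
      rw [hγ]
      simp only []
      rw [norm_add_sq_real]
      rw [real_inner_smul_left, real_inner_smul_right, hwv]
      rw [norm_smul, norm_smul, hw, hv]
      simp [abs_mul_abs_self, mul_pow, sq_abs]
    nlinarith [norm_nonneg (γ t), hsq]
  have hγmem : ∀ t, γ t ∈ sphere (0:V) 1 := by
    intro t; rw [mem_sphere_zero_iff_norm]; exact hγnorm t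
  have hγcont : Continuous γ := by fun_prop
  have hγ0 : γ 0 = w := by simp [hγ]
  have hwS : w ∈ sphere (0:V) 1 := by rwa [mem_sphere_zero_iff_norm]
  have h1 : Filter.Tendsto γ (nhdsWithin 0 (Set.Ioi 0)) (nhdsWithin w (sphere (0:V) 1)) := by
    apply Filter.Tendsto.mono_left _ nhdsWithin_le_nhds
    rw [← hγ0]
    exact tendsto_nhdsWithin_of_tendsto_nhds_of_eventually_within _
      (hγcont.tendsto 0) (Filter.Eventually.of_forall hγmem) |>.mono_left le_rfl
  have h2 : Filter.Tendsto (fun t => r (γ t)) (nhdsWithin 0 (Set.Ioi 0)) (nhds (r w)) :=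
    (hr w hwS).tendsto.comp h1
  have h3 : Filter.Tendsto (fun t => (⟪bb, γ t⟫ : ℝ)) (nhdsWithin 0 (Set.Ioi 0))
      (nhds (⟪bb, w⟫ : ℝ)) := by
    have : Continuous fun t => (⟪bb, γ t⟫ : ℝ) := continuous_const.inner hγcont
    have := this.tendsto 0
    rw [hγ0] at this
    exact this.mono_left nhdsWithin_le_nhds
  have h4 : (fun t => r (γ t)) =ᶠ[nhdsWithin 0 (Set.Ioi 0)] fun t => (⟪bb, γ t⟫ : ℝ) := by
    filter_upwards [Ioc_mem_nhdsGT_of_mem (Set.mem_Ico.mpr ⟨le_refl 0, zero_lt_one⟩)] with t ht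
    exact h t ht
  exact tendsto_nhds_unique (h2.congr' h4) h3

/-- If a function is representable by a linear form on each hyperplane (of `T`) with normal in a
set `O` containing an independent triple, then there is a single common representing vector. -/
lemma lemB (T : Submodule ℝ V) (r : V → ℝ) (O : Set V)
    (hOT : ∀ ν ∈ O, ν ∈ T) (hO0 : ∀ ν ∈ O, ν ≠ (0:V))
    (hO3 : ∃ ζ₁ ∈ O, ∃ ζ₂ ∈ O, ∃ ζ₃ ∈ O, Indep3 ζ₁ ζ₂ ζ₃)
    (hlin : ∀ ν ∈ O, ∃ a : V, ∀ u ∈ T, ⟪ν, u⟫ = 0 → ‖u‖ = 1 → r u = ⟪a, u⟫) :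
    ∃ b : V, ∀ ν ∈ O, ∀ u ∈ T, ⟪ν, u⟫ = 0 → ‖u‖ = 1 → r u = ⟪b, u⟫ := by
  classical
  -- canonical representing vectors, orthogonal to ν and in T
  have key : ∀ ν : V, ∃ a : V, ν ∈ O →
      a ∈ T ∧ ⟪ν, a⟫ = 0 ∧ ∀ u ∈ T, ⟪ν, u⟫ = 0 → ‖u‖ = 1 → r u = ⟪a, u⟫ := by
    intro ν
    by_cases hν : ν ∈ O
    · obtain ⟨a₀, ha₀⟩ := hlin ν hν
      set K : Submodule ℝ V := T ⊓ (ℝ ∙ ν)ᗮ with hK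
      refine ⟨(orthogonalProjection K a₀ : V), fun _ => ?_⟩
      have hmem : (orthogonalProjection K a₀ : V) ∈ K := (orthogonalProjection K a₀).2
      refine ⟨hmem.1, Submodule.mem_orthogonal_singleton_iff_inner_right.mp hmem.2, ?_⟩
      intro u hu hperp hunit
      have huK : u ∈ K := ⟨hu, Submodule.mem_orthogonal_singleton_iff_inner_right.mpr hperp⟩
      have hzero : ⟪a₀ - (orthogonalProjection K a₀ : V), u⟫ = 0 :=
        K.starProjection_inner_eq_zero a₀ u huK
      rw [inner_sub_left] at hzero
      rw [ha₀ u hu hperp hunit]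
      linarith
    · exact ⟨0, fun h => absurd h hν⟩
  choose A hA using key
  -- extension of the representation to non-unit vectors
  have E : ∀ ν ∈ O, ∀ μ ∈ O, ∀ x ∈ T, ⟪ν, x⟫ = 0 → ⟪μ, x⟫ = 0 → ⟪A ν - A μ, x⟫ = 0 := by
    intro ν hν μ hμ x hx hxν hxμ
    rcases eq_or_ne x 0 with rfl | hx0
    · simp
    · have hu : ‖x‖⁻¹ • x ∈ T := T.smul_mem _ hx
      have hn : ‖(‖x‖⁻¹ • x)‖ = 1 := norm_smul_inv_norm hx0
      have hr1 : r (‖x‖⁻¹ • x) = ⟪A ν, ‖x‖⁻¹ • x⟫ :=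
        (hA ν hν).2.2 _ hu (by rw [real_inner_smul_right, hxν, mul_zero]) hn
      have hr2 : r (‖x‖⁻¹ • x) = ⟪A μ, ‖x‖⁻¹ • x⟫ :=
        (hA μ hμ).2.2 _ hu (by rw [real_inner_smul_right, hxμ, mul_zero]) hn
      have heq : ⟪A ν, ‖x‖⁻¹ • x⟫ = (⟪A μ, ‖x‖⁻¹ • x⟫ : ℝ) := by rw [← hr1, ← hr2]
      rw [real_inner_smul_right, real_inner_smul_right] at heq
      have hxn : (‖x‖ : ℝ) ≠ 0 := norm_ne_zero_iff.mpr hx0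
      rw [inner_sub_left]
      have := mul_left_cancel₀ (inv_ne_zero hxn) heq
      linarith
  -- pairwise common extension
  have pair : ∀ ν ∈ O, ∀ μ ∈ O, ∃ c e : ℝ, A ν - A μ = c • ν + e • μ := by
    intro ν hν μ hμ
    exact mem_span_pair_of_perp (hOT ν hν) (hOT μ hμ)
      (T.sub_mem (hA ν hν).1 (hA μ hμ).1) (E ν hν μ hμ)
  -- parallel normals give the same representing vector
  have same : ∀ ν ∈ O, ∀ μ ∈ O, (∃ t : ℝ, μ = t • ν) → A ν = A μ := by
    rintro ν hν μ hμ ⟨t, ht⟩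
    have ht0 : t ≠ 0 := by
      rintro rfl
      exact hO0 μ hμ (by simpa using ht)
    set z := A ν - A μ with hz
    have hzT : z ∈ T := T.sub_mem (hA ν hν).1 (hA μ hμ).1
    have hzν : ⟪ν, z⟫ = 0 := by
      have h' : t * ⟪ν, A μ⟫ = 0 := by
        rw [← real_inner_smul_left, ← ht]
        exact (hA μ hμ).2.1
      have h'' : ⟪ν, A μ⟫ = (0:ℝ) := by
        rcases mul_eq_zero.mp h' with h | h
        · exact absurd h ht0
        · exact h
      rw [hz, inner_sub_right, (hA ν hν).2.1, h'']; ring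
    have hzμ : ⟪μ, z⟫ = 0 := by rw [ht, real_inner_smul_left, hzν, mul_zero]
    have := E ν hν μ hμ z hzT hzν hzμ
    rw [← hz] at this
    have : z = 0 := by rwa [inner_self_eq_zero] at this
    have : A ν - A μ = 0 := this
    linear_combination (norm := module) this
  obtain ⟨ζ₁, hζ₁, ζ₂, hζ₂, ζ₃, hζ₃, hind⟩ := hO3
  obtain ⟨c12, e12, h12⟩ := pair ζ₁ hζ₁ ζ₂ hζ₂
  set B : V := A ζ₁ - c12 • ζ₁ with hB
  have F1 : B - A ζ₁ = (-c12) • ζ₁ := by rw [hB]; module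
  have F2 : B - A ζ₂ = e12 • ζ₂ := by
    rw [hB]
    have : A ζ₁ - A ζ₂ = c12 • ζ₁ + e12 • ζ₂ := h12
    linear_combination (norm := module) this
  -- the triple juggling step
  have triple : ∀ x ∈ O, ∀ y ∈ O, ∀ z ∈ O, Indep3 x y z →
      (∃ sx : ℝ, B - A x = sx • x) → (∃ sy : ℝ, B - A y = sy • y) → ∃ sz : ℝ, B - A z = sz • z := by
    rintro x hx y hy z hz hxyz ⟨sx, hsx⟩ ⟨sy, hsy⟩
    obtain ⟨cxz, exz, hxz⟩ := pair x hx z hz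
    obtain ⟨cyz, eyz, hyz⟩ := pair y hy z hz
    have e1 : B - A z = (sx + cxz) • x + exz • z := by
      have : B - A z = (B - A x) + (A x - A z) := by module
      rw [this, hsx, hxz]; module
    have e2 : B - A z = (sy + cyz) • y + eyz • z := by
      have : B - A z = (B - A y) + (A y - A z) := by module
      rw [this, hsy, hyz]; module
    have e3 : (sx + cxz) • x + (-(sy + cyz)) • y + (exz - eyz) • z = 0 := by
      have := e1.symm.trans e2
      linear_combination (norm := module) this
    obtain ⟨h1, h2, h3⟩ := hxyz _ _ _ e3
    refine ⟨exz, ?_⟩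
    rw [e1, h1]; module
  have F3 : ∃ s : ℝ, B - A ζ₃ = s • ζ₃ :=
    triple ζ₁ hζ₁ ζ₂ hζ₂ ζ₃ hζ₃ hind ⟨-c12, F1⟩ ⟨e12, F2⟩
  -- now every ν in O
  have claimC : ∀ ν ∈ O, ∃ s : ℝ, B - A ν = s • ν := by
    intro ν hν
    by_cases h1 : Indep3 ζ₁ ζ₂ ν
    · exact triple ζ₁ hζ₁ ζ₂ hζ₂ ν hν h1 ⟨-c12, F1⟩ ⟨e12, F2⟩
    · obtain ⟨a₁, b₁, hν1⟩ := not_indep3 hind.pair12 h1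
      by_cases h2 : Indep3 ζ₂ ζ₃ ν
      · exact triple ζ₂ hζ₂ ζ₃ hζ₃ ν hν h2 ⟨e12, F2⟩ F3
      · obtain ⟨a₂, b₂, hν2⟩ := not_indep3 hind.pair23 h2
        have hcomb : a₁ • ζ₁ + (b₁ - a₂) • ζ₂ + (-b₂) • ζ₃ = 0 := by
          have := hν1.symm.trans hν2
          linear_combination (norm := module) this
        obtain ⟨ha1, hab, hb2⟩ := hind _ _ _ hcomb
        have hνζ₂ : ν = b₁ • ζ₂ := by rw [hν1, ha1]; module
        have hb₁0 : b₁ ≠ 0 := by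
          rintro rfl
          exact hO0 ν hν (by simpa using hνζ₂)
        have hAeq : A ζ₂ = A ν := same ζ₂ hζ₂ ν hν ⟨b₁, hνζ₂⟩
        refine ⟨e12 * b₁⁻¹, ?_⟩
        rw [← hAeq, F2, hνζ₂, smul_smul]
        congr 1
        field_simp
  refine ⟨B, ?_⟩
  intro ν hν u hu hperp hunit
  obtain ⟨s, hs⟩ := claimC ν hν
  have h1 : r u = ⟪A ν, u⟫ := (hA ν hν).2.2 u hu hperp hunit
  have h2 : ⟪B - A ν, u⟫ = (0:ℝ) := by
    rw [hs, real_inner_smul_left, hperp, mul_zero]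
  rw [inner_sub_left] at h2
  rw [h1]; linarith

lemma norm_cos_sin {w v : V} (hw : ‖w‖ = 1) (hv : ‖v‖ = 1) (hwv : ⟪w, v⟫ = 0) (t : ℝ) :
    ‖Real.cos t • w + Real.sin t • v‖ = 1 := by
  have hsq : ‖Real.cos t • w + Real.sin t • v‖ ^ 2 = 1 := by
    rw [norm_add_sq_real, real_inner_smul_left, real_inner_smul_right, hwv,
      norm_smul, norm_smul, hw, hv]
    simp [abs_mul_abs_self, mul_pow, sq_abs]
  nlinarith [norm_nonneg (Real.cos t • w + Real.sin t • v), hsq]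

lemma lemD (T : Submodule ℝ V) (hT : 3 ≤ finrank ℝ T) (r : V → ℝ)
    (hr : ContinuousOn r (sphere (0:V) 1))
    (W : Submodule ℝ V) (hW : finrank ℝ W ≤ 2)
    (hlin : ∀ ν, ν ∈ T → ν ≠ 0 → ν ∉ W →
      ∃ a : V, ∀ u ∈ T, ⟪ν, u⟫ = 0 → ‖u‖ = 1 → r u = ⟪a, u⟫) :
    ∃ b : V, ∀ u ∈ T, ‖u‖ = 1 → r u = ⟪b, u⟫ := by
  classical
  set O : Set V := {ν | ν ∈ T ∧ ν ≠ 0 ∧ ν ∉ W} with hO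
  have hOT : ∀ ν ∈ O, ν ∈ T := fun ν hν => hν.1
  have hO0 : ∀ ν ∈ O, ν ≠ (0:V) := fun ν hν => hν.2.1
  have hO3 : ∃ ζ₁ ∈ O, ∃ ζ₂ ∈ O, ∃ ζ₃ ∈ O, Indep3 ζ₁ ζ₂ ζ₃ := by
    obtain ⟨x, hx, hxW, y, hy, hyW, z, hz, hzW, hind⟩ := exists_indep3_avoid T W hT hW
    exact ⟨x, ⟨hx, hind.pair12.ne_zero_left, hxW⟩, y, ⟨hy, hind.pair23.ne_zero_left, hyW⟩,
      z, ⟨hz, hind.pair13.ne_zero_right, hzW⟩, hind⟩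
  obtain ⟨b, hb⟩ := lemB T r O hOT hO0 hO3 (fun ν hν => hlin ν hν.1 hν.2.1 hν.2.2)
  refine ⟨b, ?_⟩
  intro w hw hwu
  by_cases hcov : ∃ ν, ν ∈ O ∧ ⟪ν, w⟫ = 0
  · obtain ⟨ν, hν, hνw⟩ := hcov
    exact hb ν hν w hw hνw hwu
  · push_neg at hcov
    have hsub : (T ⊓ (ℝ ∙ w)ᗮ : Submodule ℝ V) ≤ W := by
      intro ν hν
      obtain ⟨hνT, hνperp⟩ := Submodule.mem_inf.mp hν
      have hνw : ⟪ν, w⟫ = 0 := by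
        rw [real_inner_comm]
        exact Submodule.mem_orthogonal_singleton_iff_inner_right.mp hνperp
      by_contra hνW
      rcases eq_or_ne ν 0 with rfl | hν0
      · exact hνW W.zero_mem
      · exact hcov ν ⟨hνT, hν0, hνW⟩ hνw
    have hfr : 2 ≤ finrank ℝ (T ⊓ (ℝ ∙ w)ᗮ : Submodule ℝ V) := by
      have := finrank_inf_perp T w
      omega
    obtain ⟨v, hv, hvu⟩ := exists_unit_mem _ (by omega : 0 < finrank ℝ (T ⊓ (ℝ ∙ w)ᗮ : Submodule ℝ V))
    obtain ⟨hvT, hvperp⟩ := Submodule.mem_inf.mp hv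
    have hwv : ⟪w, v⟫ = 0 := Submodule.mem_orthogonal_singleton_iff_inner_right.mp hvperp
    have hWeq : (T ⊓ (ℝ ∙ w)ᗮ : Submodule ℝ V) = W :=
      eq_of_le_of_finrank_le hsub (by omega)
    apply limit_helper hr hwu hvu hwv
    intro t ht
    set wt := Real.cos t • w + Real.sin t • v with hwt
    have hwtT : wt ∈ T := T.add_mem (T.smul_mem _ hw) (T.smul_mem _ hvT)
    have hwtu : ‖wt‖ = 1 := norm_cos_sin hwu hvu hwv t
    have hsint : Real.sin t ≠ 0 := by
      have := Real.sin_pos_of_pos_of_lt_pi ht.1 (by nlinarith [ht.2, Real.pi_gt_three])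
      linarith
    by_cases hcov2 : ∃ ν, ν ∈ O ∧ ⟪ν, wt⟫ = 0
    · obtain ⟨ν, hν, hνwt⟩ := hcov2
      exact hb ν hν wt hwtT hνwt hwtu
    · exfalso
      push_neg at hcov2
      have hsub2 : (T ⊓ (ℝ ∙ wt)ᗮ : Submodule ℝ V) ≤ W := by
        intro ν hν
        obtain ⟨hνT, hνperp⟩ := Submodule.mem_inf.mp hν
        have hνwt : ⟪ν, wt⟫ = 0 := by
          rw [real_inner_comm]
          exact Submodule.mem_orthogonal_singleton_iff_inner_right.mp hνperp
        by_contra hνW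
        rcases eq_or_ne ν 0 with rfl | hν0
        · exact hνW W.zero_mem
        · exact hcov2 ν ⟨hνT, hν0, hνW⟩ hνwt
      have hWeq2 : (T ⊓ (ℝ ∙ wt)ᗮ : Submodule ℝ V) = W := by
        apply eq_of_le_of_finrank_le hsub2
        have := finrank_inf_perp T wt
        omega
      -- v belongs to both hyperplanes
      have hvW : v ∈ W := hWeq ▸ hv
      have hvwt : v ∈ (T ⊓ (ℝ ∙ wt)ᗮ : Submodule ℝ V) := hWeq2 ▸ hvW
      have : ⟪wt, v⟫ = 0 :=
        Submodule.mem_orthogonal_singleton_iff_inner_right.mp (Submodule.mem_inf.mp hvwt).2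
      rw [hwt, inner_add_left, real_inner_smul_left, real_inner_smul_left, hwv,
        real_inner_self_eq_norm_sq, hvu] at this
      simp at this
      exact absurd this hsint

/-- The key inductive step: if on every hyperplane of `T` one of `p`, `q` is linear, then one of
them is linear on all of `T`. -/
lemma lemL (T : Submodule ℝ V) (hT : 3 ≤ finrank ℝ T) (p q : V → ℝ)
    (hp : ContinuousOn p (sphere (0:V) 1)) (hq : ContinuousOn q (sphere (0:V) 1))
    (hyp : ∀ ν, ν ∈ T → ν ≠ 0 →
      (∃ a : V, ∀ u ∈ T, ⟪ν, u⟫ = 0 → ‖u‖ = 1 → p u = ⟪a, u⟫) ∨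
      (∃ a : V, ∀ u ∈ T, ⟪ν, u⟫ = 0 → ‖u‖ = 1 → q u = ⟪a, u⟫)) :
    (∃ b : V, ∀ u ∈ T, ‖u‖ = 1 → p u = ⟪b, u⟫) ∨
    (∃ b : V, ∀ u ∈ T, ‖u‖ = 1 → q u = ⟪b, u⟫) := by
  classical
  set Np : Set V := {ν | ν ∈ T ∧ ν ≠ 0 ∧
    ¬∃ a : V, ∀ u ∈ T, ⟪ν, u⟫ = 0 → ‖u‖ = 1 → p u = ⟪a, u⟫} with hNp
  set Nq : Set V := {ν | ν ∈ T ∧ ν ≠ 0 ∧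
    ¬∃ a : V, ∀ u ∈ T, ⟪ν, u⟫ = 0 → ‖u‖ = 1 → q u = ⟪a, u⟫} with hNq
  by_cases hp3 : ∃ x ∈ Np, ∃ y ∈ Np, ∃ z ∈ Np, Indep3 x y z
  swap
  · -- p is linear on almost all hyperplanes, hence on T
    obtain ⟨W, hW2, hNpW⟩ := small_span Np (fun x hx => hx.2.1) hp3
    left
    apply lemD T hT p hp W hW2
    intro ν hνT hν0 hνW
    by_contra hc
    exact hνW (hNpW ν ⟨hνT, hν0, hc⟩)
  by_cases hq3 : ∃ x ∈ Nq, ∃ y ∈ Nq, ∃ z ∈ Nq, Indep3 x y z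
  swap
  · obtain ⟨W, hW2, hNqW⟩ := small_span Nq (fun x hx => hx.2.1) hq3
    right
    apply lemD T hT q hq W hW2
    intro ν hνT hν0 hνW
    by_contra hc
    exact hνW (hNqW ν ⟨hνT, hν0, hc⟩)
  -- main case
  -- p is linear on all hyperplanes with normal in Nq, with a common vector bp
  obtain ⟨bp, hbp⟩ := lemB T p Nq (fun ν hν => hν.1) (fun ν hν => hν.2.1) hq3 (by
    intro ν hν
    rcases hyp ν hν.1 hν.2.1 with h | h
    · exact h
    · exact absurd h hν.2.2)
  obtain ⟨ν₀, hν₀, -⟩ := hp3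
  set A : Set V := {u | u ∈ T ∧ ⟪ν₀, u⟫ = 0 ∧ ‖u‖ = 1 ∧ p u ≠ ⟪bp, u⟫} with hA
  have hAne : ∃ u₀, u₀ ∈ A := by
    by_contra hc
    push_neg at hc
    apply hν₀.2.2
    refine ⟨bp, ?_⟩
    intro u hu hperp hunit
    by_contra hne
    exact hc u ⟨hu, hperp, hunit, hne⟩
  have hA2 : ∃ u₁ ∈ A, ∃ u₂ ∈ A, Indep2 u₁ u₂ := by
    by_contra hc2
    push_neg at hc2
    obtain ⟨u₀, hu₀⟩ := hAne
    -- find a unit vector orthogonal to ν₀ and u₀ in T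
    have hf1 : 2 ≤ finrank ℝ (T ⊓ (ℝ ∙ ν₀)ᗮ : Submodule ℝ V) := by
      have := finrank_inf_perp T ν₀; omega
    have hf2 : 0 < finrank ℝ ((T ⊓ (ℝ ∙ ν₀)ᗮ) ⊓ (ℝ ∙ u₀)ᗮ : Submodule ℝ V) := by
      have := finrank_inf_perp (T ⊓ (ℝ ∙ ν₀)ᗮ) u₀; omega
    obtain ⟨v, hv, hvu⟩ := exists_unit_mem _ hf2
    obtain ⟨hv1, hvperp0⟩ := Submodule.mem_inf.mp hv
    obtain ⟨hvT, hvperpν⟩ := Submodule.mem_inf.mp hv1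
    have hν₀v : ⟪ν₀, v⟫ = 0 := Submodule.mem_orthogonal_singleton_iff_inner_right.mp hvperpν
    have hu₀v : ⟪u₀, v⟫ = 0 := Submodule.mem_orthogonal_singleton_iff_inner_right.mp hvperp0
    have hu₀0 : u₀ ≠ 0 := by
      intro h0
      have := hu₀.2.2.1
      rw [h0] at this; simp at this
    apply hu₀.2.2.2
    apply limit_helper hp hu₀.2.2.1 hvu hu₀v
    intro t ht
    set wt := Real.cos t • u₀ + Real.sin t • v with hwt
    have hsint : Real.sin t ≠ 0 := by
      have := Real.sin_pos_of_pos_of_lt_pi ht.1 (by nlinarith [ht.2, Real.pi_gt_three])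
      linarith
    have hwtA : wt ∉ A := by
      intro hwtA
      apply absurd (hc2 u₀ hu₀ wt hwtA)
      push_neg
      intro a bb hab
      have hbb : bb * Real.sin t = 0 := by
        have h0 := congrArg (fun x => (⟪v, x⟫ : ℝ)) hab
        rw [hwt] at h0
        simp only [inner_add_right, real_inner_smul_right, inner_zero_right] at h0
        have hvu₀ : ⟪v, u₀⟫ = (0:ℝ) := by rw [real_inner_comm]; exact hu₀v
        have hvv : ⟪v, v⟫ = (1:ℝ) := by
          rw [real_inner_self_eq_norm_sq, hvu]; norm_num
        rw [hvu₀, hvv] at h0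
        nlinarith [h0]
      have hbb0 : bb = 0 := by
        rcases mul_eq_zero.mp hbb with h | h
        · exact h
        · exact absurd h hsint
      subst hbb0
      simp only [zero_smul, add_zero, smul_eq_zero] at hab
      rcases hab with h | h
      · exact ⟨h, rfl⟩
      · exact absurd h hu₀0
    have h1 : wt ∈ T := T.add_mem (T.smul_mem _ hu₀.1) (T.smul_mem _ hvT)
    have h2 : ⟪ν₀, wt⟫ = 0 := by
      rw [hwt, inner_add_right, real_inner_smul_right, real_inner_smul_right, hu₀.2.1, hν₀v]
      ring
    have h3 : ‖wt‖ = 1 := norm_cos_sin hu₀.2.2.1 hvu hu₀v t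
    by_contra hne
    exact hwtA ⟨h1, h2, h3, hne⟩
  obtain ⟨u₁, hu₁, u₂, hu₂, hu12⟩ := hA2
  -- no normal in Nq is orthogonal to a point of A
  have hAR : ∀ u ∈ A, ∀ ν ∈ Nq, ⟪ν, u⟫ ≠ 0 := by
    intro u hu ν hν hperp
    exact hu.2.2.2 (hbp ν hν u hu.1 hperp hu.2.2.1)
  set O' : Set V := {ν | ν ∈ T ∧ ν ≠ 0 ∧ ∃ u, u ∈ A ∧ ⟪ν, u⟫ = 0} with hO'
  have hO'lin : ∀ ν ∈ O', ∃ a : V, ∀ u ∈ T, ⟪ν, u⟫ = 0 → ‖u‖ = 1 → q u = ⟪a, u⟫ := by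
    intro ν hν
    by_contra hc
    obtain ⟨u, huA, hperp⟩ := hν.2.2
    exact hAR u huA ν ⟨hν.1, hν.2.1, hc⟩ hperp
  have hO'3 : ∃ ζ₁ ∈ O', ∃ ζ₂ ∈ O', ∃ ζ₃ ∈ O', Indep3 ζ₁ ζ₂ ζ₃ := by
    have hf1 : 2 ≤ finrank ℝ (T ⊓ (ℝ ∙ u₁)ᗮ : Submodule ℝ V) := by
      have := finrank_inf_perp T u₁; omega
    obtain ⟨ν₁, hν₁X, ν₂, hν₂X, hν12⟩ := exists_indep2_of_finrank _ hf1
    have hne : ¬((T ⊓ (ℝ ∙ u₂)ᗮ : Submodule ℝ V) ≤ (ℝ ∙ ν₁) ⊔ (ℝ ∙ ν₂)) := by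
      intro hle
      have hle2 : (T ⊓ (ℝ ∙ u₂)ᗮ : Submodule ℝ V) ≤ T ⊓ (ℝ ∙ u₁)ᗮ :=
        hle.trans (sup_le ((span_singleton_le_iff_mem _ _).2 hν₁X)
          ((span_singleton_le_iff_mem _ _).2 hν₂X))
      have hlt : (T ⊓ (ℝ ∙ u₁)ᗮ : Submodule ℝ V) < T := by
        refine lt_of_le_of_ne inf_le_left ?_
        intro heq
        have : u₁ ∈ (T ⊓ (ℝ ∙ u₁)ᗮ : Submodule ℝ V) := by rw [heq]; exact hu₁.1
        have := Submodule.mem_orthogonal_singleton_iff_inner_right.mp (Submodule.mem_inf.mp this).2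
        rw [real_inner_self_eq_norm_sq, hu₁.2.2.1] at this
        norm_num at this
      have hfr1 : finrank ℝ (T ⊓ (ℝ ∙ u₁)ᗮ : Submodule ℝ V) < finrank ℝ T :=
        Submodule.finrank_lt_finrank_of_lt hlt
      have hfr2 := finrank_inf_perp T u₂
      have heq2 : (T ⊓ (ℝ ∙ u₂)ᗮ : Submodule ℝ V) = T ⊓ (ℝ ∙ u₁)ᗮ :=
        eq_of_le_of_finrank_le hle2 (by omega)
      -- derive that u₂ is parallel to u₁, contradicting independence
      set z := u₂ - ⟪u₁, u₂⟫ • u₁ with hz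
      have hzT : z ∈ T := T.sub_mem hu₂.1 (T.smul_mem _ hu₁.1)
      have hzperp : ⟪u₁, z⟫ = 0 := by
        rw [hz, inner_sub_right, real_inner_smul_right, real_inner_self_eq_norm_sq, hu₁.2.2.1]
        ring
      have hzmem : z ∈ (T ⊓ (ℝ ∙ u₂)ᗮ : Submodule ℝ V) := by
        rw [heq2]
        exact Submodule.mem_inf.mpr ⟨hzT, Submodule.mem_orthogonal_singleton_iff_inner_right.mpr hzperp⟩
      have hzperp2 : ⟪u₂, z⟫ = 0 :=
        Submodule.mem_orthogonal_singleton_iff_inner_right.mp (Submodule.mem_inf.mp hzmem).2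
      have hzz : ⟪z, z⟫ = (0:ℝ) := by
        have h1 : ⟪z, u₂⟫ = (0:ℝ) := by rw [real_inner_comm]; exact hzperp2
        have h2 : ⟪z, u₁⟫ = (0:ℝ) := by rw [real_inner_comm]; exact hzperp
        have expand : ⟪z, z⟫ = ⟪z, u₂⟫ - ⟪u₁, u₂⟫ * ⟪z, u₁⟫ := by
          nth_rewrite 2 [hz]
          rw [inner_sub_right, real_inner_smul_right]
        rw [expand, h1, h2]
        ring
      have hz0 : z = 0 := by rwa [inner_self_eq_zero] at hzz
      have : ⟪u₁, u₂⟫ • u₁ + (-1 : ℝ) • u₂ = 0 := by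
        have : u₂ - ⟪u₁, u₂⟫ • u₁ = 0 := hz ▸ hz0
        linear_combination (norm := module) -this
      obtain ⟨-, hcontra⟩ := hu12 _ _ this
      norm_num at hcontra
    obtain ⟨ν₃, hν₃mem, hν₃span⟩ := Set.not_subset.mp (fun hsub => hne hsub)
    obtain ⟨hν₁T, hν₁perp⟩ := Submodule.mem_inf.mp hν₁X
    obtain ⟨hν₂T, hν₂perp⟩ := Submodule.mem_inf.mp hν₂X
    obtain ⟨hν₃T, hν₃perp⟩ := Submodule.mem_inf.mp hν₃mem
    have hind : Indep3 ν₁ ν₂ ν₃ := by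
      intro a bb c habc
      by_cases hc : c = 0
      · subst hc
        simp only [zero_smul, add_zero] at habc
        obtain ⟨h1, h2⟩ := hν12 _ _ habc
        exact ⟨h1, h2, rfl⟩
      · exfalso
        apply hν₃span
        have h2 : c • ν₃ = -(a • ν₁) - bb • ν₂ := by linear_combination (norm := module) habc
        have : ν₃ = (-(c⁻¹*a)) • ν₁ + (-(c⁻¹*bb)) • ν₂ := by
          calc ν₃ = c⁻¹ • (c • ν₃) := by rw [smul_smul, inv_mul_cancel₀ hc, one_smul]
          _ = c⁻¹ • (-(a • ν₁) - bb • ν₂) := by rw [h2]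
          _ = (-(c⁻¹*a)) • ν₁ + (-(c⁻¹*bb)) • ν₂ := by
              rw [smul_sub, smul_neg, smul_smul, smul_smul, neg_smul, neg_smul]; abel
        rw [this]
        exact Submodule.add_mem _ (Submodule.mem_sup_left (Submodule.smul_mem _ _
          (Submodule.mem_span_singleton_self ν₁)))
          (Submodule.mem_sup_right (Submodule.smul_mem _ _ (Submodule.mem_span_singleton_self ν₂)))
    have hmemO' : ∀ ν, ν ∈ T → ν ≠ 0 → (⟪u₁, ν⟫ = 0 ∨ ⟪u₂, ν⟫ = 0) → ν ∈ O' := by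
      rintro ν hνT hν0 (h | h)
      · exact ⟨hνT, hν0, u₁, hu₁, by rwa [real_inner_comm]⟩
      · exact ⟨hνT, hν0, u₂, hu₂, by rwa [real_inner_comm]⟩
    have hν₃0 : ν₃ ≠ 0 := by
      intro h0
      exact hν₃span (h0 ▸ Submodule.zero_mem _)
    exact ⟨ν₁, hmemO' ν₁ hν₁T hν12.ne_zero_left
        (Or.inl (Submodule.mem_orthogonal_singleton_iff_inner_right.mp hν₁perp)),
      ν₂, hmemO' ν₂ hν₂T hν12.ne_zero_right
        (Or.inl (Submodule.mem_orthogonal_singleton_iff_inner_right.mp hν₂perp)),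
      ν₃, hmemO' ν₃ hν₃T hν₃0
        (Or.inr (Submodule.mem_orthogonal_singleton_iff_inner_right.mp hν₃perp)), hind⟩
  obtain ⟨c, hc⟩ := lemB T q O' (fun ν hν => hν.1) (fun ν hν => hν.2.1) hO'3 hO'lin
  right
  refine ⟨c, ?_⟩
  intro w hw hwu
  -- find u ∈ A independent from w
  have hw0 : w ≠ 0 := by
    intro h0; rw [h0] at hwu; simp at hwu
  obtain ⟨u, huA, huw⟩ : ∃ u, u ∈ A ∧ Indep2 u w := by
    by_cases hI : Indep2 u₁ w
    · exact ⟨u₁, hu₁, hI⟩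
    · obtain ⟨c₁, hc₁⟩ := not_indep2 hu12.ne_zero_left hI
      have hc₁0 : c₁ ≠ 0 := by
        intro h0; rw [h0, zero_smul] at hc₁; exact hw0 hc₁
      refine ⟨u₂, hu₂, ?_⟩
      intro a bb hab
      have : (a : ℝ) • u₂ + (bb * c₁) • u₁ = 0 := by
        rw [hc₁] at hab
        linear_combination (norm := module) hab
      have h' : (bb * c₁) • u₁ + a • u₂ = 0 := by linear_combination (norm := module) this
      obtain ⟨h1, h2⟩ := hu12 _ _ h'
      refine ⟨h2, ?_⟩
      rcases mul_eq_zero.mp h1 with h | h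
      · exact h
      · exact absurd h hc₁0
  -- a normal orthogonal to both u and w
  have hf : 0 < finrank ℝ ((T ⊓ (ℝ ∙ u)ᗮ) ⊓ (ℝ ∙ w)ᗮ : Submodule ℝ V) := by
    have h1 := finrank_inf_perp T u
    have h2 := finrank_inf_perp (T ⊓ (ℝ ∙ u)ᗮ) w
    omega
  obtain ⟨ν, hν, hνu⟩ := exists_unit_mem _ hf
  obtain ⟨hν1, hνperpw⟩ := Submodule.mem_inf.mp hν
  obtain ⟨hνT, hνperpu⟩ := Submodule.mem_inf.mp hν1
  have hν0 : ν ≠ 0 := by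
    intro h0; rw [h0] at hνu; simp at hνu
  have hνO' : ν ∈ O' := ⟨hνT, hν0, u, huA, by
    rw [real_inner_comm]
    exact Submodule.mem_orthogonal_singleton_iff_inner_right.mp hνperpu⟩
  have hνw : ⟪ν, w⟫ = 0 := by
    rw [real_inner_comm]
    exact Submodule.mem_orthogonal_singleton_iff_inner_right.mp hνperpw
  exact hc ν hνO' w hw hνw hwu

-- extension of a subspace to one of any larger dimension
lemma exists_superspace (β : Submodule ℝ V) (k : ℕ) (h1 : finrank ℝ β ≤ k)
    (h2 : k ≤ finrank ℝ V) : ∃ α : Submodule ℝ V, β ≤ α ∧ finrank ℝ α = k := by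
  induction k with
  | zero =>
    have : finrank ℝ β = 0 := by omega
    exact ⟨β, le_refl β, this⟩
  | succ n ih =>
    rcases Nat.lt_or_ge (finrank ℝ β) (n+1) with hlt | hge
    · obtain ⟨α, hβα, hα⟩ := ih (by omega) (by omega)
      have hαne : α ≠ ⊤ := by
        intro htop
        rw [htop, finrank_top] at hα
        omega
      obtain ⟨x, hx⟩ : ∃ x, x ∉ α := by
        by_contra hc
        push_neg at hc
        exact hαne (Submodule.eq_top_iff'.mpr hc)
      have hx0 : x ≠ 0 := fun h0 => hx (h0 ▸ α.zero_mem)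
      refine ⟨α ⊔ (ℝ ∙ x), hβα.trans le_sup_left, ?_⟩
      have hinf : α ⊓ (ℝ ∙ x) = ⊥ := by
        rw [Submodule.eq_bot_iff]
        intro y hy
        obtain ⟨hyα, hyx⟩ := Submodule.mem_inf.mp hy
        obtain ⟨c, rfl⟩ := Submodule.mem_span_singleton.mp hyx
        rcases eq_or_ne c 0 with rfl | hc
        · simp
        · exfalso
          apply hx
          have := α.smul_mem c⁻¹ hyα
          rwa [smul_smul, inv_mul_cancel₀ hc, one_smul] at this
      have := Submodule.finrank_sup_add_finrank_inf_eq α (ℝ ∙ x)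
      rw [hinf, finrank_bot, finrank_span_singleton hx0] at this
      omega
    · exact ⟨β, le_refl β, by omega⟩

end Helpers

theorem stmt15 {d j : ℕ} (hj2 : 2 ≤ j) (hjd : j ≤ d - 1)
    (f g : EuclideanSpace ℝ (Fin d) → ℝ)
    (hf : ContinuousOn f (Metric.sphere 0 1)) (hg : ContinuousOn g (Metric.sphere 0 1))
    (h : ∀ α : Submodule ℝ (EuclideanSpace ℝ (Fin d)), Module.finrank ℝ α = j →
      ∃ a ∈ α,
        (∀ u ∈ (α : Set (EuclideanSpace ℝ (Fin d))), ‖u‖ = 1 → f (-u) + ⟪a, u⟫ = g u) ∨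
        (∀ u ∈ (α : Set (EuclideanSpace ℝ (Fin d))), ‖u‖ = 1 → f u + ⟪a, u⟫ = g u)) :
    ∃ b : EuclideanSpace ℝ (Fin d),
      (∀ u : EuclideanSpace ℝ (Fin d), ‖u‖ = 1 → g u = f u + ⟪b, u⟫) ∨
      (∀ u : EuclideanSpace ℝ (Fin d), ‖u‖ = 1 → g u = f (-u) + ⟪b, u⟫) := by
  classical
  have hdV : finrank ℝ (EuclideanSpace ℝ (Fin d)) = d := finrank_euclideanSpace_fin
  have hd3 : 3 ≤ d := by omega
  have hp : ContinuousOn (fun u : EuclideanSpace ℝ (Fin d) => g u - f (-u))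
      (sphere (0 : EuclideanSpace ℝ (Fin d)) 1) := by
    apply ContinuousOn.sub hg
    apply ContinuousOn.comp hf continuousOn_neg
    intro u hu
    rw [mem_sphere_zero_iff_norm] at hu ⊢
    rw [norm_neg]; exact hu
  have hq : ContinuousOn (fun u : EuclideanSpace ℝ (Fin d) => g u - f u)
      (sphere (0 : EuclideanSpace ℝ (Fin d)) 1) := hg.sub hf
  -- the hypothesis descends to any subspace of dimension between 2 and j
  have hsub : ∀ T : Submodule ℝ (EuclideanSpace ℝ (Fin d)),
      2 ≤ finrank ℝ T → finrank ℝ T ≤ j →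
      (∃ a, ∀ u ∈ T, ‖u‖ = 1 → g u - f (-u) = ⟪a, u⟫) ∨
      (∃ a, ∀ u ∈ T, ‖u‖ = 1 → g u - f u = ⟪a, u⟫) := by
    intro T h2T hTj
    obtain ⟨α, hTα, hα⟩ := exists_superspace T j hTj (by omega)
    obtain ⟨a, _, hcase⟩ := h α hα
    rcases hcase with hc | hc
    · exact Or.inl ⟨a, fun u hu hunit => by linarith [hc u (hTα hu) hunit]⟩
    · exact Or.inr ⟨a, fun u hu hunit => by linarith [hc u (hTα hu) hunit]⟩
  -- upward induction on the dimension
  have main : ∀ n : ℕ, 2 ≤ n → n ≤ d → ∀ T : Submodule ℝ (EuclideanSpace ℝ (Fin d)),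
      finrank ℝ T = n →
      (∃ b, ∀ u ∈ T, ‖u‖ = 1 → g u - f (-u) = ⟪b, u⟫) ∨
      (∃ b, ∀ u ∈ T, ‖u‖ = 1 → g u - f u = ⟪b, u⟫) := by
    intro n
    induction n with
    | zero => omega
    | succ m ih =>
      intro hm2 hmd T hTm
      rcases Nat.lt_or_ge m j with hlt | hge
      · exact hsub T (by omega) (by omega)
      · -- m ≥ j ≥ 2, so m+1 ≥ 3 : use lemL with hyperplanes of dimension m ≥ 2
        have hm2' : 2 ≤ m := by omega
        have hL := lemL T (by omega) (fun u => g u - f (-u)) (fun u => g u - f u) hp hq ?_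
        · rcases hL with ⟨b, hb⟩ | ⟨b, hb⟩
          · exact Or.inl ⟨b, fun u hu hunit => hb u hu hunit⟩
          · exact Or.inr ⟨b, fun u hu hunit => hb u hu hunit⟩
        · intro ν hνT hν0
          have hhyp : finrank ℝ (T ⊓ (ℝ ∙ ν)ᗮ :
              Submodule ℝ (EuclideanSpace ℝ (Fin d))) = m := by
            have hle := finrank_inf_perp T ν
            have hlt2 : (T ⊓ (ℝ ∙ ν)ᗮ : Submodule ℝ (EuclideanSpace ℝ (Fin d))) < T := by
              refine lt_of_le_of_ne inf_le_left ?_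
              intro heq2
              have : ν ∈ (T ⊓ (ℝ ∙ ν)ᗮ : Submodule ℝ (EuclideanSpace ℝ (Fin d))) := by
                rw [heq2]; exact hνT
              have h0 := Submodule.mem_orthogonal_singleton_iff_inner_right.mp
                (Submodule.mem_inf.mp this).2
              rw [real_inner_self_eq_norm_sq] at h0
              have := norm_eq_zero.mp (by nlinarith [norm_nonneg ν] : ‖ν‖ = 0)
              exact hν0 this
            have := Submodule.finrank_lt_finrank_of_lt hlt2
            omega
          have hih := ih hm2' (by omega) (T ⊓ (ℝ ∙ ν)ᗮ) hhyp
          rcases hih with ⟨a, ha⟩ | ⟨a, ha⟩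
          · refine Or.inl ⟨a, ?_⟩
            intro u hu hperp hunit
            exact ha u (Submodule.mem_inf.mpr ⟨hu,
              Submodule.mem_orthogonal_singleton_iff_inner_right.mpr hperp⟩) hunit
          · refine Or.inr ⟨a, ?_⟩
            intro u hu hperp hunit
            exact ha u (Submodule.mem_inf.mpr ⟨hu,
              Submodule.mem_orthogonal_singleton_iff_inner_right.mpr hperp⟩) hunit
  have hfinal := main d (by omega) (le_refl d) ⊤ (by rw [finrank_top]; exact hdV)
  rcases hfinal with ⟨b, hb⟩ | ⟨b, hb⟩
  · exact ⟨b, Or.inr fun u hunit => by linarith [hb u Submodule.mem_top hunit]⟩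
  · exact ⟨b, Or.inl fun u hunit => by linarith [hb u Submodule.mem_top hunit]⟩
end

section
/- Let 2 ≤ j ≤ d−1 and let f, g be continuous real-valued functions on S^{d-1}. Assume for every j-dimensional linear subspace α of ℝ^d that either f(−u) = g(u) for all u ∈ α ∩ S^{d-1}, or f(u) = g(u) for all u ∈ α ∩ S^{d-1}. Then g = f on all of S^{d-1}, or g(u) = f(−u) for all u ∈ S^{d-1}. -/
open Module Submodule

private lemma exists_ge_finrank_eq' {K V : Type*} [Field K] [AddCommGroup V] [Module K V]
    [FiniteDimensional K V] (W : Submodule K V) (n : ℕ) (hWn : finrank K W ≤ n)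
    (hnV : n ≤ finrank K V) : ∃ α : Submodule K V, W ≤ α ∧ finrank K α = n := by
  induction n, hWn using Nat.le_induction with
  | base => exact ⟨W, le_rfl, rfl⟩
  | succ n hn ih =>
    obtain ⟨α, hWα, hα⟩ := ih (le_trans (Nat.le_succ n) hnV)
    have hlt : finrank K α < finrank K V := by omega
    obtain ⟨m, hm⟩ := α.exists_of_finrank_lt hlt
    have hm1 : m ∉ α := by simpa using hm 1 one_ne_zero
    have hm0 : m ≠ 0 := fun h0 => hm1 (h0 ▸ α.zero_mem)
    refine ⟨α ⊔ K ∙ m, le_trans hWα le_sup_left, ?_⟩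
    have hinf : α ⊓ (K ∙ m) = ⊥ := by
      rw [eq_bot_iff]
      rintro x ⟨hx1, hx2⟩
      obtain ⟨r, rfl⟩ := mem_span_singleton.mp hx2
      rcases eq_or_ne r 0 with rfl | hr
      · simp
      · exact absurd hx1 (hm r hr)
    have := Submodule.finrank_sup_add_finrank_inf_eq α (K ∙ m)
    rw [hinf, hα, finrank_span_singleton hm0] at this
    simpa using this

theorem stmt16 {d j : ℕ} (hj2 : 2 ≤ j) (hjd : j ≤ d - 1)
    (f g : EuclideanSpace ℝ (Fin d) → ℝ)
    (hf : ContinuousOn f (Metric.sphere 0 1)) (hg : ContinuousOn g (Metric.sphere 0 1))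
    (h : ∀ α : Submodule ℝ (EuclideanSpace ℝ (Fin d)), Module.finrank ℝ α = j →
      (∀ u ∈ (α : Set (EuclideanSpace ℝ (Fin d))), ‖u‖ = 1 → f (-u) = g u) ∨
      (∀ u ∈ (α : Set (EuclideanSpace ℝ (Fin d))), ‖u‖ = 1 → f u = g u)) :
    (∀ u : EuclideanSpace ℝ (Fin d), ‖u‖ = 1 → g u = f u) ∨
    (∀ u : EuclideanSpace ℝ (Fin d), ‖u‖ = 1 → g u = f (-u)) := by
  classical
  by_contra hc
  push_neg at hc
  obtain ⟨⟨u, hu1, hu2⟩, ⟨v, hv1, hv2⟩⟩ := hc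
  -- span of {u, v} has finrank ≤ 2
  set W : Submodule ℝ (EuclideanSpace ℝ (Fin d)) := Submodule.span ℝ {u, v} with hW
  have hWle : finrank ℝ W ≤ 2 := by
    have := finrank_span_le_card (R := ℝ) ({u, v} : Set (EuclideanSpace ℝ (Fin d)))
    refine this.trans ?_
    rw [Set.toFinset_insert, Set.toFinset_singleton]
    exact (Finset.card_insert_le _ _).trans (by simp)
  have hdim : finrank ℝ (EuclideanSpace ℝ (Fin d)) = d := finrank_euclideanSpace_fin
  have hjd' : j ≤ finrank ℝ (EuclideanSpace ℝ (Fin d)) := by omega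
  obtain ⟨α, hWα, hα⟩ := exists_ge_finrank_eq' W j (hWle.trans hj2) hjd'
  have huα : u ∈ α := hWα (Submodule.subset_span (by simp))
  have hvα : v ∈ α := hWα (Submodule.subset_span (by simp))
  rcases h α hα with h' | h'
  · exact hv2 (h' v hvα hv1).symm
  · exact hu2 (h' u huα hu1).symm
end
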